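/- arXiv:2507.02594 — 2 statements merged into one kernel-verified Lean document; each statement's English description precedes it below -/
import Mathlib

section
/- Let G be a finite group of order p·m where p is a prime and gcd(p, m) = 1 (i.e., p divides |G| exactly to the first power). Then p does not divide [ρ(G)]_p, the exponent of p in the prime factorization of ρ(G). -/
/-!
Since `p` divides `|G| = p * m` exactly once, the `p`-adic valuation of every element order is
`0` or `1`, so `[ρ(G)]_p` counts the elements whose order is divisible by `p`; these are the
complement of the solutions of `g ^ m = 1`, so it suffices that `p` does not divide the number
of those solutions. Pick `x` of order `p` and let `⟨x⟩` act by conjugation: modulo `p` the count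
reduces to the solutions commuting with `x`. In the centraliser `C(x)`, every element is
uniquely `a * y` with `a ∈ ⟨x⟩` and `y ^ m = 1`, because `h ^ m` lies in the Sylow subgroup
`⟨x⟩` and `· ^ m` is bijective on `⟨x⟩`. So the reduced count is `|C(x)| / p`, a divisor of `m`.
-/

open scoped MatrixGroups

/-- `rho G` is the product of the orders of all elements of `G`. -/
noncomputable def rho (G : Type*) [Monoid G] : ℕ := ∏ᶠ g : G, orderOf g

/-- `expRho G` is the set of exponents in the prime factorization of `rho G`. -/
noncomputable def expRho (G : Type*) [Monoid G] : Finset ℕ :=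
  (rho G).factorization.support.image fun p => (rho G).factorization p

open Subgroup

theorem Nat.factorization_eq_ite_of_not_sq_dvd {n p : ℕ} (hp : p.Prime) (hn : n ≠ 0)
    (h : ¬ p ^ 2 ∣ n) : n.factorization p = if p ∣ n then 1 else 0 := by
  split_ifs with hpn
  · have := (hp.dvd_iff_one_le_factorization hn).mp hpn
    have := mt (hp.pow_dvd_iff_le_factorization hn).mpr h
    omega
  · exact Nat.factorization_eq_zero_of_not_dvd hpn

theorem Nat.Prime.not_sq_dvd_mul_of_coprime {p m : ℕ} (hp : p.Prime) (hcop : p.Coprime m) :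
    ¬ p ^ 2 ∣ p * m := by
  rw [sq, Nat.mul_dvd_mul_iff_left hp.pos]
  exact hp.coprime_iff_not_dvd.mp hcop

def powEqOneConj (G : Type*) [Group G] (m : ℕ) : SubMulAction (ConjAct G) G where
  carrier := {g | g ^ m = 1}
  smul_mem' c g (hg : g ^ m = 1) := by
    show (c • g) ^ m = 1
    rw [ConjAct.smul_def, conj_pow, hg, mul_one, mul_inv_cancel]

section

variable {G : Type*} [Group G] {p m : ℕ}

theorem pow_eq_one_iff_not_dvd_orderOf (hp : p.Prime) (hG : Nat.card G = p * m)
    (hcop : p.Coprime m) (g : G) : g ^ m = 1 ↔ ¬ p ∣ orderOf g := by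
  rw [← orderOf_dvd_iff_pow_eq_one]
  constructor
  · exact fun hgm hpg => hp.coprime_iff_not_dvd.mp hcop (hpg.trans hgm)
  · intro hpg
    exact (hp.coprime_iff_not_dvd.mpr hpg).symm.dvd_mul_left.mp (hG ▸ orderOf_dvd_natCard g)

variable [Finite G]

theorem factorization_rho_eq_card (hp : p.Prime) (h : ¬ p ^ 2 ∣ Nat.card G) :
    (rho G).factorization p = Nat.card {g : G // p ∣ orderOf g} := by
  classical
  cases nonempty_fintype G
  have hval (g : G) : (orderOf g).factorization p = if p ∣ orderOf g then 1 else 0 :=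
    Nat.factorization_eq_ite_of_not_sq_dvd hp (orderOf_pos g).ne'
      fun h2 => h (h2.trans (orderOf_dvd_natCard g))
  rw [rho, finprod_eq_prod_of_fintype, Nat.factorization_prod fun g _ => (orderOf_pos g).ne',
    Finsupp.finsetSum_apply, Nat.card_eq_fintype_card, Fintype.card_subtype, Finset.card_filter]
  exact Finset.sum_congr rfl fun g _ => hval g

theorem card_dvd_orderOf_add_card_pow_eq_one (hp : p.Prime) (hG : Nat.card G = p * m)
    (hcop : p.Coprime m) :
    Nat.card {g : G // p ∣ orderOf g} + Nat.card {g : G // g ^ m = 1} = p * m := by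
  classical
  cases nonempty_fintype G
  simp only [pow_eq_one_iff_not_dvd_orderOf hp hG hcop, Nat.card_eq_fintype_card,
    Fintype.card_subtype_compl] at hG ⊢
  have := Fintype.card_subtype_le fun g : G => p ∣ orderOf g
  omega

theorem mem_zpowers_of_commute (hp : p.Prime) (h : ¬ p ^ 2 ∣ Nat.card G) {x z : G}
    (hx : orderOf x = p) (hz : z ^ p = 1) (hxz : Commute x z) : z ∈ zpowers x := by
  have : Fact p.Prime := ⟨hp⟩
  have hfac : (Nat.card G).factorization p = 1 := by
    rw [Nat.factorization_eq_ite_of_not_sq_dvd hp Nat.card_pos.ne' h,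
      if_pos (hx ▸ orderOf_dvd_natCard x)]
  let P : Sylow p G := .ofCard (zpowers x) (by rw [Nat.card_zpowers, hx, hfac, pow_one])
  have hzp : IsPGroup p (zpowers z) := .of_card_dvd_pow (n := 1) <| by
    rw [Nat.card_zpowers, pow_one]
    exact orderOf_dvd_of_pow_eq_one hz
  have hzP : zpowers z ≤ normalizer (P : Set G) := by
    rw [zpowers_le]
    refine centralizer_le_normalizer _ (mem_centralizer_iff.mpr ?_)
    rintro _ ⟨k, rfl⟩
    exact (hxz.zpow_left k).eq
  have := hzp.inf_normalizer_sylow P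
  rw [inf_eq_left.mpr hzP, left_eq_inf] at this
  exact this (mem_zpowers z)

theorem card_pow_eq_one_modEq {n : ℕ} [Fact p.Prime] {x : G} (hx : orderOf x = p ^ n) :
    Nat.card {g : G // g ^ m = 1} ≡ Nat.card {g : G // g ^ m = 1 ∧ Commute x g} [MOD p] := by
  let H := zpowers (ConjAct.toConjAct x)
  have hH : IsPGroup p H :=
    .of_card ((Nat.card_zpowers _).trans ((ConjAct.toConjAct.orderOf_eq x).trans hx))
  have hfix (g : powEqOneConj G m) :
      g ∈ MulAction.fixedPoints H (powEqOneConj G m) ↔ Commute x g := by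
    rw [MulAction.mem_fixedPoints]
    constructor
    · intro hg
      have : x * g * x⁻¹ = g := congrArg Subtype.val (hg ⟨_, mem_zpowers _⟩)
      exact mul_inv_eq_iff_eq_mul.mp this
    · rintro hxg ⟨_, k, rfl⟩
      apply Subtype.ext
      show ConjAct.toConjAct x ^ k • (g : G) = g
      rw [← map_zpow, ConjAct.toConjAct_smul, (hxg.zpow_left k).eq, mul_inv_cancel_right]
  have := hH.card_modEq_card_fixedPoints (powEqOneConj G m)
  rwa [Nat.card_congr ((Equiv.subtypeEquivRight hfix).trans
    (Equiv.subtypeSubtypeEquivSubtypeInter _ _))] at this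

theorem card_centralizer_eq_mul (hp : p.Prime) (hG : Nat.card G = p * m)
    (hcop : p.Coprime m) {x : G} (hx : orderOf x = p) :
    Nat.card (centralizer {x}) = p * Nat.card {g : G // g ^ m = 1 ∧ Commute x g} := by
  have commute_of_mem {a y : G} (ha : a ∈ zpowers x) (hy : Commute x y) : Commute a y := by
    obtain ⟨k, rfl⟩ := ha
    exact hy.zpow_left k
  let e := powCoprime (G := zpowers x) (n := m) (by rwa [Nat.card_zpowers, hx])
  let f : zpowers x × {g : G // g ^ m = 1 ∧ Commute x g} → centralizer {x} := fun ay =>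
    ⟨ay.1 * ay.2, mem_centralizer_singleton_iff.mpr
      ((commute_of_mem ay.1.2 (.refl x)).symm.mul_right ay.2.2.2).symm.eq⟩
  have hinj : Function.Injective f := by
    rintro ⟨a, y⟩ ⟨a', y'⟩ h
    have hy : (y' : G) = ((a'⁻¹ * a : zpowers x) : G) * y := by
      have : (a : G) * y = a' * y' := congrArg Subtype.val h
      push_cast
      rw [mul_assoc, this, inv_mul_cancel_left]
    have hm : e (a'⁻¹ * a) = e 1 := by
      apply Subtype.ext
      have := y'.2.1
      rw [hy, (commute_of_mem (a'⁻¹ * a).2 y.2.2).mul_pow, y.2.1, mul_one] at this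
      simpa [e, powCoprime_apply] using this
    obtain rfl : a' = a := inv_mul_eq_one.mp (e.injective hm)
    simp only [inv_mul_cancel, OneMemClass.coe_one, one_mul] at hy
    rw [Subtype.ext hy]
  have hsurj : Function.Surjective f := by
    rintro ⟨h, hh⟩
    have hxh : Commute x h := (mem_centralizer_singleton_iff.mp hh).symm
    have hmem : h ^ m ∈ zpowers x :=
      mem_zpowers_of_commute hp (hG ▸ hp.not_sq_dvd_mul_of_coprime hcop) hx
        (by rw [← pow_mul, mul_comm, ← hG, pow_card_eq_one']) (hxh.pow_right m)
    set a := e.symm ⟨h ^ m, hmem⟩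
    have ha : (a : G) ^ m = h ^ m := congrArg Subtype.val (e.apply_symm_apply _)
    refine ⟨⟨a, (a : G)⁻¹ * h, ?_, ?_⟩, Subtype.ext (mul_inv_cancel_left _ _)⟩
    · rw [(commute_of_mem (inv_mem a.2) hxh).mul_pow, inv_pow, ha, inv_mul_cancel]
    · exact (commute_of_mem (inv_mem a.2) (.refl x)).symm.mul_right hxh
  rw [← Nat.card_eq_of_bijective f ⟨hinj, hsurj⟩, Nat.card_prod, Nat.card_zpowers, hx]

theorem not_dvd_card_pow_eq_one (hp : p.Prime) (hG : Nat.card G = p * m)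
    (hcop : p.Coprime m) : ¬ p ∣ Nat.card {g : G // g ^ m = 1} := by
  have : Fact p.Prime := ⟨hp⟩
  obtain ⟨x, hx⟩ := exists_prime_orderOf_dvd_card' p (hG ▸ dvd_mul_right p m)
  have hdvd : p * Nat.card {g : G // g ^ m = 1 ∧ Commute x g} ∣ p * m :=
    card_centralizer_eq_mul hp hG hcop hx ▸ hG ▸ card_subgroup_dvd_card _
  intro h
  have hmod := card_pow_eq_one_modEq (m := m) (hx.trans (pow_one p).symm)
  exact hp.coprime_iff_not_dvd.mp hcop
    (((hmod.dvd_iff dvd_rfl).mp h).trans (Nat.dvd_of_mul_dvd_mul_left hp.pos hdvd))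

end

theorem p_not_dvd_p_part (G : Type*) [Group G] [Finite G]
    (p m : ℕ) (hp : p.Prime) (hG : Nat.card G = p * m)
    (hcop : Nat.Coprime p m) :
    ¬ p ∣ (rho G).factorization p := by
  rw [factorization_rho_eq_card hp (hG ▸ hp.not_sq_dvd_mul_of_coprime hcop)]
  intro h
  have hsum := card_dvd_orderOf_add_card_pow_eq_one hp hG hcop
  exact not_dvd_card_pow_eq_one hp hG hcop ((Nat.dvd_add_right h).mp (hsum ▸ dvd_mul_right p m))
end

section
/- Let G be a finite group whose order is not a prime power. Then every prime divisor of |G| divides some element of Exp_ρ(G); that is, π(G) ⊆ E(G), where E(G) is the set of all primes dividing some element of Exp_ρ(G). -/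
open scoped MatrixGroups

/-!
Fix primes `p ≠ q` dividing `|G|`. The exponent of `q` in `ρ(G)` is
`∑_{i ≥ 1} #{g | q ^ i ∣ o(g)}`, so it suffices that `p` divides each of these counts.
Take `z` of order `p`. Conjugation by `z` permutes `S = {g | q ^ i ∣ o(g)}` with order
dividing `p`, so `#S ≡ #(S ∩ C(z)) [MOD p]`; and left multiplication by `z` permutes
`S ∩ C(z)` without fixed points (multiplying by a commuting element of order prime to `q` does
not change the `q`-part of the order), so `p ∣ #(S ∩ C(z))`.
-/

open Finset

theorem Nat.exists_prime_ne_dvd_of_not_isPrimePow {n p : ℕ} (hn : ¬ IsPrimePow n)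
    (hp : p.Prime) (hpn : p ∣ n) : ∃ q, q.Prime ∧ q ∣ n ∧ q ≠ p := by
  by_contra! h
  exact hn (isPrimePow_iff_unique_prime_dvd.2 ⟨p, ⟨hp, hpn⟩, fun q hq => h q hq.1 hq.2⟩)

theorem Equiv.Perm.card_filter_modEq_card_filter_apply_eq {α : Type*} [Fintype α]
    [DecidableEq α] {p : ℕ} [Fact p.Prime] {σ : Perm α} (hσ : σ ^ p = 1) (P : α → Prop)
    [DecidablePred P] (hP : ∀ x, P (σ x) ↔ P x) :
    #{x | P x} ≡ #{x | P x ∧ σ x = x} [MOD p] := by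
  have hτ : σ.subtypePerm hP ^ p ^ 1 = 1 := by
    rw [pow_one, subtypePerm_pow]
    simp only [hσ]
    exact subtypePerm_one P
  have hfix : #(σ.subtypePerm hP).supportᶜ = #{x | P x ∧ σ x = x} := by
    rw [← card_map (Function.Embedding.subtype P)]
    congr 1
    ext x
    simp [and_comm]
  rw [← Fintype.card_subtype, ← hfix]
  exact (card_compl_support_modEq hτ).symm

theorem Commute.dvd_orderOf_mul_iff_of_coprime {G : Type*} [Group G] {z g : G} (hc : Commute z g)
    {n : ℕ} (hn : n.Coprime (orderOf z)) : n ∣ orderOf (z * g) ↔ n ∣ orderOf g := by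
  refine ⟨fun h => hn.dvd_of_dvd_mul_left (h.trans hc.orderOf_mul_dvd_mul_orderOf), fun h => ?_⟩
  have hc' : Commute z⁻¹ (z * g) := ((Commute.refl z).mul_right hc).inv_left
  have := hc'.orderOf_mul_dvd_mul_orderOf
  rw [inv_mul_cancel_left, orderOf_inv] at this
  exact hn.dvd_of_dvd_mul_left (h.trans this)

section CountingModP

open scoped Classical

variable {G : Type*} [Group G] [Fintype G] {p : ℕ} [Fact p.Prime] {z : G}

theorem card_filter_modEq_card_filter_commute (hz : z ^ p = 1) (P : G → Prop) [DecidablePred P]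
    (hP : ∀ g, P (z * g * z⁻¹) ↔ P g) :
    #{g | P g} ≡ #{g | P g ∧ Commute z g} [MOD p] := by
  have hσ : MulAut.toPerm G (MulAut.conj z) ^ p = 1 := by
    rw [← map_pow, ← map_pow, hz, map_one, map_one]
  convert Equiv.Perm.card_filter_modEq_card_filter_apply_eq hσ P hP using 4 with g
  exact mul_inv_eq_iff_eq_mul.symm

theorem prime_dvd_card_filter_commute (hz : orderOf z = p) (P : G → Prop) [DecidablePred P]
    (hP : ∀ g, Commute z g → (P (z * g) ↔ P g)) :
    p ∣ #{g | P g ∧ Commute z g} := by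
  have hτ : Equiv.mulLeft z ^ p = 1 := by
    rw [Equiv.pow_mulLeft, ← hz, pow_orderOf_eq_one, Equiv.mulLeft_one]
  have hcomm : ∀ g, Commute z (z * g) ↔ Commute z g := fun g =>
    ⟨fun h => by simpa using (Commute.refl z).inv_right.mul_right h, (Commute.refl z).mul_right⟩
  have hfree : #{g | (P g ∧ Commute z g) ∧ Equiv.mulLeft z g = g} = 0 := by
    refine card_eq_zero.2 (filter_eq_empty_iff.2 fun g _ ⟨_, hg⟩ => ?_)
    rw [Equiv.coe_mulLeft, mul_eq_right] at hg
    exact (Fact.out : p.Prime).ne_one (hz ▸ hg ▸ orderOf_one)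
  refine Nat.modEq_zero_iff_dvd.1 (hfree ▸ Equiv.Perm.card_filter_modEq_card_filter_apply_eq hτ
    (fun g => P g ∧ Commute z g) fun g => ?_)
  rw [Equiv.coe_mulLeft, hcomm]
  exact and_congr_left fun hc => hP g hc

end CountingModP

theorem prime_dvd_card_filter_dvd_orderOf {G : Type*} [Group G] [Fintype G] {p n : ℕ}
    [Fact p.Prime] (hpG : p ∣ Nat.card G) (hpn : ¬ p ∣ n) :
    p ∣ #{g : G | n ∣ orderOf g} := by
  classical
  obtain ⟨z, hz⟩ := exists_prime_orderOf_dvd_card' p hpG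
  have hn : n.Coprime (orderOf z) := hz ▸ ((Nat.Prime.coprime_iff_not_dvd Fact.out).2 hpn).symm
  have hconj := card_filter_modEq_card_filter_commute (hz ▸ pow_orderOf_eq_one z)
    (fun g => n ∣ orderOf g) fun g => by
      rw [(show SemiconjBy z g (z * g * z⁻¹) by simp [SemiconjBy]).orderOf_eq]
  have hcentral := prime_dvd_card_filter_commute hz (fun g => n ∣ orderOf g) fun g hc =>
    hc.dvd_orderOf_mul_iff_of_coprime hn
  exact (hconj.dvd_iff dvd_rfl).2 hcentral

section Rho

variable {G : Type*} [LeftCancelMonoid G] [Fintype G]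

theorem factorization_rho (q : ℕ) :
    (rho G).factorization q = ∑ g : G, (orderOf g).factorization q := by
  rw [rho, finprod_eq_prod_of_fintype, Nat.factorization_prod fun g _ => (orderOf_pos g).ne',
    Finsupp.finsetSum_apply]

theorem factorization_rho_eq_sum_card {q : ℕ} (hq : q.Prime) :
    (rho G).factorization q = ∑ i ∈ Ico 1 (Fintype.card G), #{g : G | q ^ i ∣ orderOf g} := by
  have hg (g : G) :
      (orderOf g).factorization q = #{i ∈ Ico 1 (Fintype.card G) | q ^ i ∣ orderOf g} :=
    Nat.factorization_eq_card_pow_dvd_of_lt hq (orderOf_pos g)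
      (orderOf_le_card_univ.trans_lt (Nat.lt_pow_self hq.one_lt))
  simp_rw [factorization_rho, hg]
  exact sum_card_bipartiteAbove_eq_sum_card_bipartiteBelow _

theorem factorization_rho_ne_zero {q : ℕ} (hq : q.Prime) {y : G} (hy : orderOf y = q) :
    (rho G).factorization q ≠ 0 := by
  rw [factorization_rho, Ne, sum_eq_zero_iff]
  intro h
  simpa [hy, hq.factorization_self] using h y (mem_univ y)

end Rho

theorem factorization_rho_mem_expRho {G : Type*} [Monoid G] {q : ℕ}
    (hq : (rho G).factorization q ≠ 0) : (rho G).factorization q ∈ expRho G :=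
  mem_image_of_mem _ (Finsupp.mem_support_iff.2 hq)

theorem primes_divide_some_exponent (G : Type*) [Group G] [Finite G]
    (h : ¬ IsPrimePow (Nat.card G)) :
    ∀ p : ℕ, p.Prime → p ∣ Nat.card G → ∃ a ∈ expRho G, p ∣ a := by
  intro p hp hpG
  cases nonempty_fintype G
  have := Fact.mk hp
  obtain ⟨q, hq, hqG, hqp⟩ := Nat.exists_prime_ne_dvd_of_not_isPrimePow h hp hpG
  have := Fact.mk hq
  obtain ⟨y, hy⟩ := exists_prime_orderOf_dvd_card' q hqG
  refine ⟨_, factorization_rho_mem_expRho (factorization_rho_ne_zero hq hy), ?_⟩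
  rw [factorization_rho_eq_sum_card hq]
  have hpq : ¬ p ∣ q := fun hpq => hqp ((Nat.prime_dvd_prime_iff_eq hp hq).1 hpq).symm
  exact dvd_sum fun i _ =>
    prime_dvd_card_filter_dvd_orderOf hpG fun hpqi => hpq (hp.dvd_of_dvd_pow hpqi)
end
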